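/- For complex numbers v, H, φ, ψ (with V = (vn̄ + v̄n)/2, H⃗ = (Hn̄ + H̄n)/2 in the complexified normal plane with bilinear form ⟨n,n⟩=⟨n̄,n̄⟩=0, ⟨n,n̄⟩=2), the identity 2Re(v²(H̄²(|ψ|²+|φ|²) + 6ψφ̄|H|²)) + |v|²(6(H²ψφ̄ + H̄²φψ̄) + 10|H|²(|ψ|²+|φ|²)) = 6⟨H⃗,V⟩⟨Å(V),H⃗⟩ + |B(e,e)|²|H⃗∧V|² holds, where Å(V) = ¼(⟨B(e,e),V⟩B(ē,ē) + ⟨B(ē,ē),V⟩B(e,e)), B(e,e) = 2ψ̄n̄ + 2φ̄n, |B(e,e)|² = ⟨B(e,e), conj(B(e,e))⟩ = 8(|φ|²+|ψ|²), and |H⃗∧V|² = |H⃗|²|V|² − ⟨H⃗,V⟩². -/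

import Mathlib

open Complex

noncomputable section

/-- The complex bilinear inner product on `span_ℂ{n̄, n}` (pairs `(x,y) ↔ x n̄ + y n`),
with `⟨n,n⟩ = ⟨n̄,n̄⟩ = 0`, `⟨n,n̄⟩ = 2`. -/
def nbil (v w : ℂ × ℂ) : ℂ := 2 * (v.1 * w.2 + v.2 * w.1)

/-- Identity from the simplification of the second variation formula: for complex numbers
`v, H, φ, ψ`, with `V = (v n̄ + v̄ n)/2`, `H⃗ = (H n̄ + H̄ n)/2`, `B(e,e) = 2ψ̄ n̄ + 2φ̄ n`,
`B(ē,ē) = 2φ n̄ + 2ψ n`, `Å(V) = ¼(⟨B(e,e),V⟩B(ē,ē) + ⟨B(ē,ē),V⟩B(e,e))`,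
`|B(e,e)|² = ⟨B(e,e), conj B(e,e)⟩` and `|H⃗∧V|² = |H|²|v|² − ⟨H⃗,V⟩²`:
`2Re(v²(H̄²(|ψ|²+|φ|²) + 6ψφ̄|H|²)) + |v|²(6(H²ψφ̄ + H̄²φψ̄) + 10|H|²(|ψ|²+|φ|²))
  = 6⟨H⃗,V⟩⟨Å(V),H⃗⟩ + |B(e,e)|²|H⃗∧V|²`. -/
theorem stmt_15 (v H φ ψ : ℂ) :
    let V : ℂ × ℂ := (v / 2, (starRingEnd ℂ) v / 2)
    let Hvec : ℂ × ℂ := (H / 2, (starRingEnd ℂ) H / 2)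
    let Bee : ℂ × ℂ := (2 * (starRingEnd ℂ) ψ, 2 * (starRingEnd ℂ) φ)
    let Bbb : ℂ × ℂ := (2 * φ, 2 * ψ)
    let Acal : ℂ × ℂ := (1 / 4 : ℂ) • (nbil Bee V • Bbb + nbil Bbb V • Bee)
    let X : ℂ := v ^ 2 * (((starRingEnd ℂ) H) ^ 2
          * (((‖ψ‖ : ℝ) : ℂ) ^ 2 + ((‖φ‖ : ℝ) : ℂ) ^ 2)
        + 6 * ψ * (starRingEnd ℂ) φ * ((‖H‖ : ℝ) : ℂ) ^ 2)
    (X + (starRingEnd ℂ) X)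
      + ((‖v‖ : ℝ) : ℂ) ^ 2
        * (6 * (H ^ 2 * ψ * (starRingEnd ℂ) φ + ((starRingEnd ℂ) H) ^ 2 * φ * (starRingEnd ℂ) ψ)
          + 10 * ((‖H‖ : ℝ) : ℂ) ^ 2
            * (((‖ψ‖ : ℝ) : ℂ) ^ 2 + ((‖φ‖ : ℝ) : ℂ) ^ 2))
      = 6 * nbil Hvec V * nbil Acal Hvec
        + nbil Bee Bbb
          * (((‖H‖ : ℝ) : ℂ) ^ 2 * ((‖v‖ : ℝ) : ℂ) ^ 2
              - (nbil Hvec V) ^ 2) := by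
  have h : ∀ z : ℂ, ((‖z‖ : ℝ) : ℂ) ^ 2 = z * (starRingEnd ℂ) z := by
    intro z
    rw [Complex.mul_conj, ← Complex.sq_norm]
    push_cast
    ring
  intro V Hvec Bee Bbb Acal X
  simp only [X, Acal, Bee, Bbb, Hvec, V, nbil, h, Prod.smul_fst, Prod.smul_snd,
    Prod.fst_add, Prod.snd_add, smul_eq_mul, map_mul, map_add, map_pow, map_ofNat,
    map_div₀, Complex.conj_conj]
  ring

end
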